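/- arXiv:2603.25971 — 3 statements merged into one kernel-verified Lean document; each statement's English description precedes it below -/
import Mathlib

section
/- Fix an arm w ∈ {0,1} and N units with fixed distinct potential event times 0 < t₁ < t₂ < ... < t_N, fixed potential outcomes y₁, ..., y_N ∈ ℝ, and fixed propensities π₁, ..., π_N ∈ (0,1). Let W₁, ..., W_N be independent random variables with P(Wᵢ = w) = πᵢ, set Zᵢ = 1[Wᵢ = w]/πᵢ − 1, and for each unit let the augmentation be a deterministic function mᵢ : [0,∞) → ℝ with reward process rᵢ(t) = yᵢ·1[tᵢ ≤ t] and residual eᵢ(t) = rᵢ(t) − mᵢ(t). Define the estimation error process M_t = Σᵢ Zᵢ·eᵢ(t) and the single-arm filtration (F_t)_{t≥0} where F_t = σ({Wᵢ : tᵢ ≤ t}). Then (M_t)_{t≥0} is adapted to (F_t) and is a martingale with respect to (F_t) if and only if for every i: mᵢ(t) = 0 for all t < tᵢ and mᵢ is constant on [tᵢ, ∞). -/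
/-!
Each summand `Zᵢ eᵢ(s)` is treated separately. The weight `Zᵢ` is a centred function of the event
`Aᵢ` alone, so it is independent of `F_s` for `s < tᵢ` and `F_s`-measurable for `s ≥ tᵢ`. Hence if
`eᵢ` vanishes before `tᵢ` and is constant afterwards, `Zᵢ eᵢ` is a martingale, and so is the sum.
Conversely, pairwise independence gives `∫_{Aᵢ} M_s = eᵢ(s) (1 - πᵢ)`. For `s ≥ tᵢ` this is
constant by the martingale property, as `Aᵢ ∈ F_{tᵢ}`; for `s < tᵢ` it equals `πᵢ E[M_s] = 0`
because `Aᵢ` is independent of `F_s`.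
-/

open MeasureTheory ProbabilityTheory
open scoped NNReal

open MeasurableSpace

section Martingale

variable {Ω ι T : Type*} {mΩ : MeasurableSpace Ω} {μ : Measure Ω} [LinearOrder T]
  {F : Filtration T mΩ}

theorem martingale_finsetSum {f : ι → T → Ω → ℝ} (s : Finset ι)
    (hf : ∀ i ∈ s, Martingale (f i) F μ) : Martingale (∑ i ∈ s, f i) F μ := by
  classical
  induction s using Finset.induction_on with
  | empty => simpa using martingale_zero ℝ F μ
  | insert i s hi ih =>
    rw [Finset.sum_insert hi]
    exact (hf i (Finset.mem_insert_self i s)).add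
      (ih fun j hj => hf j (Finset.mem_insert_of_mem hj))

theorem martingale_ite_le_of_indep [IsFiniteMeasure μ] {m : MeasurableSpace Ω} {X : Ω → ℝ}
    {τ : T} (hmF : m ≤ F τ) (hX : StronglyMeasurable[m] X) (hXint : Integrable X μ)
    (hX0 : ∫ ω, X ω ∂μ = 0) (hindep : ∀ s, s < τ → Indep m (F s) μ) :
    Martingale (fun s => if τ ≤ s then X else 0) F μ := by
  have hadapted : StronglyAdapted F (fun s => if τ ≤ s then X else 0) := fun s => by
    dsimp only
    split_ifs with h
    · exact hX.mono (hmF.trans (F.mono h))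
    · exact stronglyMeasurable_const
  refine ⟨hadapted, fun s s' hss' => ?_⟩
  by_cases hs : τ ≤ s
  · simp only [hs, hs.trans hss', if_true]
    rw [condExp_of_stronglyMeasurable (F.le s) (hX.mono (hmF.trans (F.mono hs))) hXint]
  by_cases hs' : τ ≤ s'
  · simp only [hs, hs', if_true, if_false]
    refine (condExp_indep_eq (hmF.trans (F.le τ)) (F.le s) hX
      (hindep s (lt_of_not_ge hs))).trans ?_
    rw [hX0]
    rfl
  · simp only [hs, hs', if_false, condExp_zero]
    rfl

end Martingale

section CenteredIPW

variable {Ω : Type*} {m mΩ : MeasurableSpace Ω} {μ : Measure Ω} {A B : Set Ω} {p : ℝ}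

/-- The weight `Zᵢ = 1[Wᵢ = w] / πᵢ - 1`, with `A` the event `{Wᵢ = w}` and `p = πᵢ`. -/
noncomputable def centeredIPW (A : Set Ω) (p : ℝ) (ω : Ω) : ℝ := A.indicator (fun _ => 1) ω / p - 1

theorem measurable_centeredIPW (hA : MeasurableSet[m] A) : Measurable[m] (centeredIPW A p) :=
  ((measurable_const.indicator hA).div_const _).sub measurable_const

theorem integrable_centeredIPW [IsFiniteMeasure μ] (hA : MeasurableSet A) :
    Integrable (centeredIPW A p) μ :=
  (((integrable_const 1).indicator hA).div_const _).sub (integrable_const 1)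

theorem setIntegral_centeredIPW [IsFiniteMeasure μ] (hA : MeasurableSet A) :
    ∫ ω in B, centeredIPW A p ω ∂μ = μ.real (B ∩ A) / p - μ.real B := by
  have hind : Integrable (A.indicator fun _ => (1 : ℝ)) μ := (integrable_const 1).indicator hA
  unfold centeredIPW
  rw [integral_sub (hind.div_const _).integrableOn (integrable_const 1).integrableOn,
    integral_div, setIntegral_indicator hA, setIntegral_const, setIntegral_const]
  simp

theorem integral_centeredIPW [IsProbabilityMeasure μ] (hA : MeasurableSet A)
    (hAp : μ.real A = p) (hp : p ≠ 0) : ∫ ω, centeredIPW A p ω ∂μ = 0 := by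
  rw [← setIntegral_univ, setIntegral_centeredIPW hA, Set.univ_inter, hAp, div_self hp]
  simp

theorem setIntegral_self_centeredIPW [IsFiniteMeasure μ] (hA : MeasurableSet A)
    (hAp : μ.real A = p) (hp : p ≠ 0) : ∫ ω in A, centeredIPW A p ω ∂μ = 1 - p := by
  rw [setIntegral_centeredIPW hA, Set.inter_self, hAp, div_self hp]

theorem setIntegral_centeredIPW_of_indepSet [IsFiniteMeasure μ] (hA : MeasurableSet A)
    (hAB : IndepSet B A μ) (hAp : μ.real A = p) (hp : p ≠ 0) :
    ∫ ω in B, centeredIPW A p ω ∂μ = 0 := by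
  rw [setIntegral_centeredIPW hA, measureReal_def, hAB.measure_inter_eq_mul, ENNReal.toReal_mul,
    ← measureReal_def, ← measureReal_def, hAp, mul_div_cancel_right₀ _ hp, sub_self]

end CenteredIPW

section SingleArm

variable {Ω ι T : Type*} {mΩ : MeasurableSpace Ω} {μ : Measure Ω} {A : ι → Set Ω} {π : ι → ℝ}

theorem ProbabilityTheory.iIndepSet.indep_generateFrom_singleton (hA : ∀ i, MeasurableSet (A i))
    (h : iIndepSet A μ) {S : Set ι} {j : ι} (hj : j ∉ S) :
    Indep (generateFrom {A j}) (generateFrom {u | ∃ i ∈ S, A i = u}) μ := by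
  convert h.indep_generateFrom_of_disjoint hA {j} S (Set.disjoint_singleton_left.2 hj)
  ext u
  simp [eq_comm]

theorem ProbabilityTheory.iIndepSet.indepSet_of_ne (hA : ∀ i, MeasurableSet (A i))
    (h : iIndepSet A μ) {i j : ι} (hij : i ≠ j) : IndepSet (A i) (A j) μ :=
  (h.indep_generateFrom_singleton hA (S := {j}) hij).indepSet_of_measurableSet
    (measurableSet_generateFrom rfl) (measurableSet_generateFrom ⟨j, rfl, rfl⟩)

section Filtration

variable [LinearOrder T] {τ : ι → T} {F : Filtration T mΩ}

theorem generateFrom_singleton_le_of_le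
    (hF : ∀ s, F s = generateFrom {u | ∃ i, τ i ≤ s ∧ u = A i}) {i : ι} {s : T} (h : τ i ≤ s) :
    generateFrom {A i} ≤ F s := by
  rw [hF]
  exact generateFrom_mono (by rintro _ rfl; exact ⟨i, h, rfl⟩)

theorem indep_generateFrom_singleton_of_lt (hA : ∀ i, MeasurableSet (A i)) (h : iIndepSet A μ)
    (hF : ∀ s, F s = generateFrom {u | ∃ i, τ i ≤ s ∧ u = A i}) {i : ι} {s : T} (hs : s < τ i) :
    Indep (generateFrom {A i}) (F s) μ := by
  convert h.indep_generateFrom_singleton hA (S := {j | τ j ≤ s}) (not_le.2 hs)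
  rw [hF]
  congr 1
  ext u
  simp [eq_comm]

end Filtration

variable [Fintype ι]

/-- The estimation error `M_s = ∑ᵢ Zᵢ eᵢ(s)`, with `c i s` the residual `eᵢ(s)`. -/
noncomputable def ipwProcess (A : ι → Set Ω) (π : ι → ℝ) (c : ι → T → ℝ) (s : T) (ω : Ω) : ℝ :=
  ∑ i, centeredIPW (A i) (π i) ω * c i s

theorem setIntegral_sum_centeredIPW_mul [IsFiniteMeasure μ] (hA : ∀ i, MeasurableSet (A i))
    (hindep : iIndepSet A μ) (hAπ : ∀ i, μ.real (A i) = π i) (hπ : ∀ i, π i ≠ 0)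
    (a : ι → ℝ) (j : ι) :
    ∫ ω in A j, ∑ i, centeredIPW (A i) (π i) ω * a i ∂μ = a j * (1 - π j) := by
  rw [integral_finsetSum _ fun i _ => ((integrable_centeredIPW (hA i)).mul_const _).integrableOn,
    Finset.sum_eq_single j, integral_mul_const, setIntegral_self_centeredIPW (hA j) (hAπ j) (hπ j),
    mul_comm]
  · intro i _ hij
    rw [integral_mul_const, setIntegral_centeredIPW_of_indepSet (hA i)
      (hindep.indepSet_of_ne hA (Ne.symm hij)) (hAπ i) (hπ i), zero_mul]
  · simp

theorem integral_ipwProcess [IsProbabilityMeasure μ] (hA : ∀ i, MeasurableSet (A i))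
    (hAπ : ∀ i, μ.real (A i) = π i) (hπ : ∀ i, π i ≠ 0) (c : ι → T → ℝ) (s : T) :
    ∫ ω, ipwProcess A π c s ω ∂μ = 0 := by
  unfold ipwProcess
  rw [integral_finsetSum _ fun i _ => (integrable_centeredIPW (hA i)).mul_const _]
  refine Finset.sum_eq_zero fun i _ => ?_
  rw [integral_mul_const, integral_centeredIPW (hA i) (hAπ i) (hπ i), zero_mul]

end SingleArm

section EventTime

variable {Ω ι T : Type*} {mΩ : MeasurableSpace Ω} {μ : Measure Ω} [IsProbabilityMeasure μ]
  [Fintype ι] [LinearOrder T] {A : ι → Set Ω} {π : ι → ℝ} {τ : ι → T} {F : Filtration T mΩ}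
  {c : ι → T → ℝ}

theorem coeff_eq_ite_of_martingale_ipwProcess (hM : Martingale (ipwProcess A π c) F μ)
    (hA : ∀ i, MeasurableSet (A i)) (hindep : iIndepSet A μ) (hAπ : ∀ i, μ.real (A i) = π i)
    (hπ0 : ∀ i, π i ≠ 0) (hπ1 : ∀ i, π i ≠ 1)
    (hF : ∀ s, F s = generateFrom {u | ∃ i, τ i ≤ s ∧ u = A i}) (i : ι) (s : T) :
    c i s = if τ i ≤ s then c i (τ i) else 0 := by
  have hcoeff : ∀ s, ∫ ω in A i, ipwProcess A π c s ω ∂μ = c i s * (1 - π i) := fun s =>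
    setIntegral_sum_centeredIPW_mul hA hindep hAπ hπ0 (fun j => c j s) i
  have h1π : 1 - π i ≠ 0 := sub_ne_zero.2 (hπ1 i).symm
  split_ifs with hs
  · have h := hM.setIntegral_eq hs
      (generateFrom_singleton_le_of_le hF le_rfl _ (measurableSet_generateFrom rfl))
    rw [hcoeff, hcoeff] at h
    exact (mul_right_cancel₀ h1π h).symm
  · have hindepM : Indep (generateFrom {A i}) ((borel ℝ).comap (ipwProcess A π c s)) μ :=
      indep_of_indep_of_le_right (indep_generateFrom_singleton_of_lt hA hindep hF (not_le.1 hs))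
        (hM.stronglyMeasurable s).measurable.comap_le
    have h := hindepM.setIntegral_eq_mul (f := id) (generateFrom_le (by rintro _ rfl; exact hA i))
      (hM.integrable s).aemeasurable (measurableSet_generateFrom rfl)
      aestronglyMeasurable_id
    simp only [id, integral_ipwProcess hA hAπ hπ0, mul_zero, hcoeff] at h
    exact (mul_eq_zero.1 h).resolve_right h1π

theorem martingale_ipwProcess_of_coeff_eq_ite (hA : ∀ i, MeasurableSet (A i))
    (hindep : iIndepSet A μ) (hAπ : ∀ i, μ.real (A i) = π i) (hπ0 : ∀ i, π i ≠ 0)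
    (hF : ∀ s, F s = generateFrom {u | ∃ i, τ i ≤ s ∧ u = A i})
    (hc : ∀ i s, c i s = if τ i ≤ s then c i (τ i) else 0) :
    Martingale (ipwProcess A π c) F μ := by
  have hsum : ipwProcess A π c =
      ∑ i, fun s => if τ i ≤ s then fun ω => centeredIPW (A i) (π i) ω * c i (τ i) else 0 := by
    ext s ω
    simp only [ipwProcess, Finset.sum_apply]
    refine Finset.sum_congr rfl fun i _ => ?_
    rw [hc i s]
    split_ifs <;> simp
  rw [hsum]
  have hZ : ∀ i, Measurable[generateFrom {A i}] (centeredIPW (A i) (π i)) := fun i =>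
    measurable_centeredIPW (measurableSet_generateFrom (Set.mem_singleton _))
  refine martingale_finsetSum _ fun i _ => martingale_ite_le_of_indep
    (generateFrom_singleton_le_of_le hF le_rfl) ((hZ i).mul_const _).stronglyMeasurable
    ((integrable_centeredIPW (hA i)).mul_const _) ?_
    fun s hs => indep_generateFrom_singleton_of_lt hA hindep hF hs
  rw [integral_mul_const, integral_centeredIPW (hA i) (hAπ i) (hπ0 i), zero_mul]

theorem martingale_ipwProcess_iff (hA : ∀ i, MeasurableSet (A i)) (hindep : iIndepSet A μ)
    (hAπ : ∀ i, μ.real (A i) = π i) (hπ0 : ∀ i, π i ≠ 0) (hπ1 : ∀ i, π i ≠ 1)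
    (hF : ∀ s, F s = generateFrom {u | ∃ i, τ i ≤ s ∧ u = A i}) :
    Martingale (ipwProcess A π c) F μ ↔
      ∀ i, (∀ s, s < τ i → c i s = 0) ∧ ∀ s, τ i ≤ s → c i s = c i (τ i) := by
  refine ⟨fun hM i => ?_, fun hc => ?_⟩
  · have h := coeff_eq_ite_of_martingale_ipwProcess hM hA hindep hAπ hπ0 hπ1 hF i
    exact ⟨fun s hs => by simpa [not_le.2 hs] using h s, fun s hs => by simpa [hs] using h s⟩
  · refine martingale_ipwProcess_of_coeff_eq_ite hA hindep hAπ hπ0 hF fun i s => ?_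
    split_ifs with hs
    exacts [(hc i).2 s hs, (hc i).1 s (not_le.1 hs)]

end EventTime

theorem single_arm_martingale_iff_event_time_augmentation_general
    {Ω : Type*} {mΩ : MeasurableSpace Ω} (μ : Measure Ω) [IsProbabilityMeasure μ]
    (N : ℕ) (t : Fin N → ℝ≥0)
    (y : Fin N → ℝ) (π : Fin N → ℝ) (hπ : ∀ i, π i ∈ Set.Ioo (0 : ℝ) 1)
    (A : Fin N → Set Ω) (hA : ∀ i, MeasurableSet (A i))
    (hAπ : ∀ i, μ (A i) = ENNReal.ofReal (π i))
    (hindep : iIndepSet A μ)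
    (m : Fin N → ℝ≥0 → ℝ)
    (F : Filtration ℝ≥0 mΩ)
    (hF : ∀ s : ℝ≥0,
      F s = MeasurableSpace.generateFrom {u | ∃ i, t i ≤ s ∧ u = A i}) :
    (Adapted F (fun s ω => ∑ i,
        ((A i).indicator (fun _ => (1 : ℝ)) ω / π i - 1)
          * (y i * (if t i ≤ s then (1 : ℝ) else 0) - m i s)) ∧
     Martingale (fun s ω => ∑ i,
        ((A i).indicator (fun _ => (1 : ℝ)) ω / π i - 1)
          * (y i * (if t i ≤ s then (1 : ℝ) else 0) - m i s)) F μ)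
    ↔ (∀ i, (∀ s, s < t i → m i s = 0) ∧ (∀ s, t i ≤ s → m i s = m i (t i))) := by
  have hAπ' : ∀ i, μ.real (A i) = π i := fun i => by
    rw [measureReal_def, hAπ i, ENNReal.toReal_ofReal (hπ i).1.le]
  rw [and_iff_right_of_imp fun hM => hM.stronglyAdapted.adapted]
  refine (martingale_ipwProcess_iff (c := fun i s => y i * (if t i ≤ s then 1 else 0) - m i s)
    hA hindep hAπ' (fun i => (hπ i).1.ne') (fun i => (hπ i).2.ne) hF).trans
    (forall_congr' fun i => and_congr (forall₂_congr fun s hs => ?_)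
      (forall₂_congr fun s hs => ?_))
  · simp [not_le.2 hs]
  · simp [hs]

/-- Fix an arm and `N` units with fixed distinct positive potential
event times `t 1 < ... < t N`, fixed outcomes `y i`, and propensities
`π i ∈ (0,1)`. Treatment indicators are modeled by independent events `A i` with
`μ (A i) = π i`; `Z i = 1[A i]/π i - 1`. With deterministic augmentations
`m i : ℝ≥0 → ℝ`, reward `r i s = y i · 1[t i ≤ s]` and residual
`e i s = r i s - m i s`, the estimation error `M s = ∑ i, Z i · e i s` is
adapted to the single-arm filtration `F s = σ({A i : t i ≤ s})` and is a
martingale w.r.t. it iff, for every `i`, `m i` vanishes before `t i` and is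
constant on `[t i, ∞)`. -/
theorem single_arm_martingale_iff_event_time_augmentation
    {Ω : Type*} {mΩ : MeasurableSpace Ω} (μ : Measure Ω) [IsProbabilityMeasure μ]
    (N : ℕ) (t : Fin N → ℝ≥0) (ht0 : ∀ i, 0 < t i) (htmono : StrictMono t)
    (y : Fin N → ℝ) (π : Fin N → ℝ) (hπ : ∀ i, π i ∈ Set.Ioo (0 : ℝ) 1)
    (A : Fin N → Set Ω) (hA : ∀ i, MeasurableSet (A i))
    (hAπ : ∀ i, μ (A i) = ENNReal.ofReal (π i))
    (hindep : iIndepSet A μ)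
    (m : Fin N → ℝ≥0 → ℝ)
    (F : Filtration ℝ≥0 mΩ)
    (hF : ∀ s : ℝ≥0,
      F s = MeasurableSpace.generateFrom {u | ∃ i, t i ≤ s ∧ u = A i}) :
    (Adapted F (fun s ω => ∑ i,
        ((A i).indicator (fun _ => (1 : ℝ)) ω / π i - 1)
          * (y i * (if t i ≤ s then (1 : ℝ) else 0) - m i s)) ∧
     Martingale (fun s ω => ∑ i,
        ((A i).indicator (fun _ => (1 : ℝ)) ω / π i - 1)
          * (y i * (if t i ≤ s then (1 : ℝ) else 0) - m i s)) F μ)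
    ↔ (∀ i, (∀ s, s < t i → m i s = 0) ∧ (∀ s, t i ≤ s → m i s = m i (t i))) :=
  single_arm_martingale_iff_event_time_augmentation_general μ N t y π hπ A hA hAπ hindep m F hF
end

section
/- Let units i = 1, ..., N have independent treatment assignments Wᵢ ∈ {0,1} with πᵢ(1) = P(Wᵢ = 1) ∈ (0,1) and πᵢ(0) = 1 − πᵢ(1). For two fixed times s ≤ t, let e_{is}(w), e_{it}(w) ∈ ℝ be fixed residuals and m_{is}(w), m_{it}(w) ∈ ℝ fixed augmentations for each unit i and arm w ∈ {0,1}. Define Δ̂_{iu} = (m_{iu}(1) + (1[Wᵢ = 1]/πᵢ(1))·e_{iu}(1)) − (m_{iu}(0) + (1[Wᵢ = 0]/πᵢ(0))·e_{iu}(0)) for u ∈ {s, t}, and Δ̂_u = Σᵢ Δ̂_{iu}. Then Cov(Δ̂_s, Δ̂_t) = Σᵢ [ e_{is}(1)e_{it}(1)/πᵢ(1) + e_{is}(0)e_{it}(0)/πᵢ(0) − (e_{is}(1) − e_{is}(0))·(e_{it}(1) − e_{it}(0)) ]. -/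
/-!
Each AIPW term is affine in the treatment indicator, `Δ̂_{iu} = b_{iu} + a_{iu} · 1[Wᵢ = 1]`,
with slope `a_{iu} = e_{iu}(1)/πᵢ(1) + e_{iu}(0)/πᵢ(0)`. Covariance is bilinear and blind to
constants, and independence kills the cross terms `i ≠ j`, so
`Cov(Δ̂_s, Δ̂_t) = Σᵢ a_{is} a_{it} πᵢ(1) πᵢ(0)`, which expands to the stated sum.
-/

open MeasureTheory ProbabilityTheory

namespace ProbabilityTheory

variable {Ω : Type*} {mΩ : MeasurableSpace Ω} {μ : Measure Ω}

lemma memLp_const_add_mul_indicator [IsFiniteMeasure μ] {A : Set Ω} (hA : MeasurableSet A)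
    (b a : ℝ) : MemLp (fun ω => b + a * A.indicator (fun _ => (1 : ℝ)) ω) 2 μ :=
  (memLp_const b).add (((memLp_const (1 : ℝ)).indicator hA).const_mul a)

lemma covariance_eq_integral_mul_sub [IsProbabilityMeasure μ] {X Y : Ω → ℝ}
    (hX : MemLp X 2 μ) (hY : MemLp Y 2 μ) :
    cov[X, Y; μ] = ∫ ω, X ω * Y ω ∂μ - (∫ ω, X ω ∂μ) * ∫ ω, Y ω ∂μ :=
  covariance_eq_sub hX hY

lemma covariance_const_add_mul [IsProbabilityMeasure μ] {X Y : Ω → ℝ}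
    (hX : Integrable X μ) (hY : Integrable Y μ) (a b c d : ℝ) :
    cov[fun ω => b + a * X ω, fun ω => d + c * Y ω; μ] = a * c * cov[X, Y; μ] := by
  rw [covariance_const_add_left (hX.const_mul a), covariance_const_add_right (hY.const_mul c),
    covariance_const_mul_left, covariance_const_mul_right, mul_assoc]

lemma covariance_indicator_one_self [IsProbabilityMeasure μ] {A : Set Ω} (hA : MeasurableSet A) :
    cov[A.indicator (fun _ => (1 : ℝ)), A.indicator (fun _ => (1 : ℝ)); μ]
      = μ.real A * (1 - μ.real A) := by
  have hmem : MemLp (A.indicator fun _ => (1 : ℝ)) 2 μ := (memLp_const 1).indicator hA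
  have hsq :
      A.indicator (fun _ => (1 : ℝ)) * A.indicator (fun _ => 1) = A.indicator fun _ => 1 := by
    ext ω; by_cases h : ω ∈ A <;> simp [h]
  rw [covariance_eq_sub hmem hmem, hsq, integral_indicator_const _ hA, smul_eq_mul, mul_one]
  ring

lemma iIndepSet.covariance_indicator_one {ι : Type*} [DecidableEq ι] {A : ι → Set Ω}
    (h : iIndepSet A μ) (hA : ∀ i, MeasurableSet (A i)) (i j : ι) :
    cov[(A i).indicator (fun _ => (1 : ℝ)), (A j).indicator (fun _ => (1 : ℝ)); μ]
      = if i = j then μ.real (A i) * (1 - μ.real (A i)) else 0 := by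
  have := h.isProbabilityMeasure
  split_ifs with hij
  · subst hij
    exact covariance_indicator_one_self (hA i)
  · have hind : iIndepFun (fun k => (A k).indicator fun _ => (1 : ℝ)) μ :=
      h.iIndepFun_indicator
    exact (hind.indepFun hij).covariance_eq_zero
      ((memLp_const 1).indicator (hA i)) ((memLp_const 1).indicator (hA j))

lemma iIndepSet.covariance_sum_const_add_mul_indicator {ι : Type*} [Fintype ι] {A : ι → Set Ω}
    (h : iIndepSet A μ) (hA : ∀ i, MeasurableSet (A i)) (a b c d : ι → ℝ) :
    cov[fun ω => ∑ i, (b i + a i * (A i).indicator (fun _ => (1 : ℝ)) ω),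
        fun ω => ∑ i, (d i + c i * (A i).indicator (fun _ => (1 : ℝ)) ω); μ]
      = ∑ i, a i * c i * (μ.real (A i) * (1 - μ.real (A i))) := by
  classical
  have := h.isProbabilityMeasure
  have hind (i : ι) : MemLp ((A i).indicator fun _ => (1 : ℝ)) 2 μ :=
    (memLp_const 1).indicator (hA i)
  rw [covariance_fun_sum_fun_sum (fun i => memLp_const_add_mul_indicator (hA i) (b i) (a i))
    (fun i => memLp_const_add_mul_indicator (hA i) (d i) (c i))]
  simp only [covariance_const_add_mul ((hind _).integrable one_le_two)
    ((hind _).integrable one_le_two), h.covariance_indicator_one hA, mul_ite, mul_zero,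
    Finset.sum_ite_eq, Finset.mem_univ, ite_true]

end ProbabilityTheory

lemma aipw_term_eq_const_add_mul_indicator {Ω : Type*} (A : Set Ω) (p m₁ m₀ e₁ e₀ : ℝ)
    (ω : Ω) :
    (m₁ + (A.indicator (fun _ => (1 : ℝ)) ω / p) * e₁)
        - (m₀ + (Aᶜ.indicator (fun _ => (1 : ℝ)) ω / (1 - p)) * e₀)
      = (m₁ - m₀ - e₀ / (1 - p))
          + (e₁ / p + e₀ / (1 - p)) * A.indicator (fun _ => (1 : ℝ)) ω := by
  by_cases h : ω ∈ A <;> simp [h] <;> ring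

lemma aipw_slope_mul_slope_mul_bernoulli_variance {p : ℝ} (hp₀ : p ≠ 0) (hp₁ : 1 - p ≠ 0)
    (e₁ e₀ f₁ f₀ : ℝ) :
    (e₁ / p + e₀ / (1 - p)) * (f₁ / p + f₀ / (1 - p)) * (p * (1 - p))
      = e₁ * f₁ / p + e₀ * f₀ / (1 - p) - (e₁ - e₀) * (f₁ - f₀) := by
  field_simp
  ring

/-- With independent assignments (events `A i`, `μ (A i) = π i ∈ (0,1)`)
and fixed residuals `es i w`, `et i w` and augmentations `ms i w`, `mt i w` at two
analysis times `s ≤ t`, the AIPW treatment-effect estimators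
`Δ̂_u = ∑ i, (m_{iu}(1) + 1[Wᵢ=1]/πᵢ(1)·e_{iu}(1)) - (m_{iu}(0) + 1[Wᵢ=0]/πᵢ(0)·e_{iu}(0))`
satisfy
`Cov(Δ̂_s, Δ̂_t) = ∑ i, e_{is}(1)e_{it}(1)/πᵢ(1) + e_{is}(0)e_{it}(0)/πᵢ(0)
  − (e_{is}(1) − e_{is}(0))(e_{it}(1) − e_{it}(0))`. -/
theorem aipw_te_covariance_formula
    {Ω : Type*} [MeasurableSpace Ω] (μ : Measure Ω) [IsProbabilityMeasure μ]
    (N : ℕ) (π : Fin N → ℝ) (hπ : ∀ i, π i ∈ Set.Ioo (0 : ℝ) 1)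
    (A : Fin N → Set Ω) (hA : ∀ i, MeasurableSet (A i))
    (hAπ : ∀ i, μ (A i) = ENNReal.ofReal (π i))
    (hindep : iIndepSet A μ)
    (es et ms mt : Fin N → Fin 2 → ℝ) :
    (∫ ω, (∑ i, ((ms i 1 + ((A i).indicator (fun _ => (1 : ℝ)) ω / π i) * es i 1)
              - (ms i 0 + ((A i)ᶜ.indicator (fun _ => (1 : ℝ)) ω / (1 - π i)) * es i 0)))
          * (∑ i, ((mt i 1 + ((A i).indicator (fun _ => (1 : ℝ)) ω / π i) * et i 1)
              - (mt i 0 + ((A i)ᶜ.indicator (fun _ => (1 : ℝ)) ω / (1 - π i)) * et i 0))) ∂μ)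
      - (∫ ω, ∑ i, ((ms i 1 + ((A i).indicator (fun _ => (1 : ℝ)) ω / π i) * es i 1)
              - (ms i 0 + ((A i)ᶜ.indicator (fun _ => (1 : ℝ)) ω / (1 - π i)) * es i 0)) ∂μ)
        * (∫ ω, ∑ i, ((mt i 1 + ((A i).indicator (fun _ => (1 : ℝ)) ω / π i) * et i 1)
              - (mt i 0 + ((A i)ᶜ.indicator (fun _ => (1 : ℝ)) ω / (1 - π i)) * et i 0)) ∂μ)
      = ∑ i, (es i 1 * et i 1 / π i + es i 0 * et i 0 / (1 - π i)
          - (es i 1 - es i 0) * (et i 1 - et i 0)) := by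
  have hmem (b a : Fin N → ℝ) :
      MemLp (fun ω => ∑ i, (b i + a i * (A i).indicator (fun _ => (1 : ℝ)) ω)) 2 μ :=
    memLp_finsetSum _ fun i _ => memLp_const_add_mul_indicator (hA i) (b i) (a i)
  simp only [aipw_term_eq_const_add_mul_indicator]
  rw [← covariance_eq_integral_mul_sub (hmem _ _) (hmem _ _),
    hindep.covariance_sum_const_add_mul_indicator hA]
  refine Finset.sum_congr rfl fun i _ => ?_
  have hπA : μ.real (A i) = π i := by
    rw [measureReal_def, hAπ i, ENNReal.toReal_ofReal (hπ i).1.le]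
  rw [hπA, aipw_slope_mul_slope_mul_bernoulli_variance (hπ i).1.ne'
    (sub_ne_zero.mpr (hπ i).2.ne')]
end

section
/- Fix η > 0, α ∈ (0,1), and π ∈ (0,1), and define b(V; δ) = √( ((V·η² + 1)/η²) · log((V·η² + 1)/δ²) ). Define the relative width R_π(V₀, V₁) = ( b(V₀; α/2) + b(V₁; α/2) ) / b( V₁/(1−π) + V₀/π ; α ). Then in the symmetric case V₀ = V₁ = V, R_π(V, V) → 2·√(π·(1−π)) as V → ∞. -/
/-!
Since `V / (1 - p) + V / p = V / (p (1 - p))`, each summand of the numerator is compared with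
the boundary at the rescaled variance `V / c`, `c = p (1 - p)`. Both boundaries grow like
`√(V log V)`: the arguments of the two logarithms differ by an asymptotically constant factor,
so the logarithms are asymptotically equal and only the linear prefactors, of ratio `c`,
survive; hence each summand contributes `√c`.
-/

open Filter Topology Real

theorem tendsto_affine_div_affine {a c : ℝ} (hc : c ≠ 0) (b d : ℝ) :
    Tendsto (fun x => (a * x + b) / (c * x + d)) atTop (𝓝 (a / c)) := by
  have hlim : Tendsto (fun x : ℝ => (a + b * x⁻¹) / (c + d * x⁻¹)) atTop
      (𝓝 ((a + b * 0) / (c + d * 0))) :=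
    ((tendsto_inv_atTop_zero.const_mul b).const_add a).div
      ((tendsto_inv_atTop_zero.const_mul d).const_add c) (by simpa using hc)
  simp only [mul_zero, add_zero] at hlim
  refine hlim.congr' ?_
  filter_upwards [eventually_gt_atTop 0] with x hx
  rw [← mul_div_mul_right _ _ hx.ne']
  congr 1 <;> field_simp

theorem tendsto_log_div_log_of_tendsto_div {ι : Type*} {l : Filter ι} {f g : ι → ℝ} {L : ℝ}
    (hg : Tendsto g l atTop) (hfg : Tendsto (fun x => f x / g x) l (𝓝 L)) (hL : 0 < L) :
    Tendsto (fun x => log (f x) / log (g x)) l (𝓝 1) := by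
  have hlim : Tendsto (fun x => log (f x / g x) * (log (g x))⁻¹ + 1) l (𝓝 (log L * 0 + 1)) :=
    (((continuousAt_log hL.ne').tendsto.comp hfg).mul
      (tendsto_log_atTop.comp hg).inv_tendsto_atTop).add_const 1
  rw [mul_zero, zero_add] at hlim
  refine hlim.congr' ?_
  filter_upwards [hfg.eventually (lt_mem_nhds hL), hg.eventually_gt_atTop 1] with x hfgx hgx
  have hlog : 0 < log (g x) := log_pos hgx
  have hfx : 0 < f x := by
    have := mul_pos hfgx (by linarith : 0 < g x)
    rwa [div_mul_cancel₀ _ (by linarith)] at this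
  rw [log_div hfx.ne' (by linarith)]
  field_simp
  ring

theorem tendsto_mul_log_div_mul_log {ι : Type*} {l : Filter ι} {u v f g : ι → ℝ} {L M : ℝ}
    (huv : Tendsto (fun x => u x / v x) l (𝓝 L)) (hg : Tendsto g l atTop)
    (hfg : Tendsto (fun x => f x / g x) l (𝓝 M)) (hM : 0 < M) :
    Tendsto (fun x => u x * log (f x) / (v x * log (g x))) l (𝓝 L) := by
  simpa only [mul_div_mul_comm, mul_one] using
    huv.mul (tendsto_log_div_log_of_tendsto_div hg hfg hM)

noncomputable def normalMixtureBoundary (η V δ : ℝ) : ℝ :=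
  √((V * η ^ 2 + 1) / η ^ 2 * log ((V * η ^ 2 + 1) / δ ^ 2))

theorem tendsto_normalMixtureBoundary_div_scaled {η c δ δ' : ℝ} (hη : η ≠ 0) (hc : 0 < c)
    (hδ : δ ≠ 0) (hδ' : δ' ≠ 0) :
    Tendsto (fun V => normalMixtureBoundary η V δ / normalMixtureBoundary η (V / c) δ')
      atTop (𝓝 √c) := by
  have hη2 : 0 < η ^ 2 := by positivity
  have hscale : ∀ V, V / c * η ^ 2 + 1 = η ^ 2 / c * V + 1 := fun V => by ring
  have hst : Tendsto (fun V => (V * η ^ 2 + 1) / (V / c * η ^ 2 + 1)) atTop (𝓝 c) := by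
    have h := tendsto_affine_div_affine (a := η ^ 2) (div_ne_zero hη2.ne' hc.ne') 1 1
    rw [div_div_cancel₀ hη2.ne'] at h
    simpa only [hscale, mul_comm] using h
  have hg : Tendsto (fun V => (V / c * η ^ 2 + 1) / δ' ^ 2) atTop atTop := by
    simp only [hscale]
    exact (tendsto_atTop_add_const_right _ 1
      (tendsto_id.const_mul_atTop (div_pos hη2 hc))).atTop_div_const (by positivity)
  have hratio := tendsto_mul_log_div_mul_log
    (u := fun V => (V * η ^ 2 + 1) / η ^ 2) (v := fun V => (V / c * η ^ 2 + 1) / η ^ 2)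
    (f := fun V => (V * η ^ 2 + 1) / δ ^ 2) (M := c * (δ' ^ 2 / δ ^ 2))
    (by simpa only [div_div_div_cancel_right₀ hη2.ne'] using hst) hg
    ((hst.mul_const _).congr fun V => by
      rw [div_div_div_comm, div_div_eq_mul_div, mul_div_assoc])
    (by positivity)
  refine ((continuous_sqrt.tendsto c).comp hratio).congr' ?_
  filter_upwards [eventually_ge_atTop 0, hg.eventually_gt_atTop 1] with V hV hgV
  have hlog := log_pos hgV
  rw [Function.comp_apply, sqrt_div' _ (by positivity)]
  rfl

/-- Relative width of the union bound vs. the variance upper bound,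
symmetric case. With `b(V; δ) = √(((V·η²+1)/η²)·log((V·η²+1)/δ²))` and
`R_p(V₀, V₁) = (b(V₀; α/2) + b(V₁; α/2)) / b(V₁/(1−p) + V₀/p; α)`,
if `V₀ = V₁ = V` then `R_p(V, V) → 2·√(p·(1−p))` as `V → ∞`. -/
theorem relative_width_symmetric
    (η α p : ℝ) (hη : 0 < η) (hα : α ∈ Set.Ioo (0 : ℝ) 1)
    (hp : p ∈ Set.Ioo (0 : ℝ) 1)
    (b : ℝ → ℝ → ℝ)
    (hb : ∀ V δ, b V δ = Real.sqrt (((V * η ^ 2 + 1) / η ^ 2)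
        * Real.log ((V * η ^ 2 + 1) / δ ^ 2))) :
    Tendsto (fun V : ℝ => (b V (α / 2) + b V (α / 2))
        / b (V / (1 - p) + V / p) α)
      atTop (nhds (2 * Real.sqrt (p * (1 - p)))) := by
  obtain ⟨hp0, hp1⟩ := hp
  have hq : 0 < p * (1 - p) := mul_pos hp0 (sub_pos.mpr hp1)
  have hW : ∀ V : ℝ, V / (1 - p) + V / p = V / (p * (1 - p)) := fun V => by
    field_simp [(sub_pos.mpr hp1).ne']
    ring
  obtain rfl : b = normalMixtureBoundary η := funext₂ hb
  simpa only [hW, ← two_mul, mul_div_assoc] using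
    (tendsto_normalMixtureBoundary_div_scaled hη.ne' hq (div_ne_zero hα.1.ne' two_ne_zero)
      hα.1.ne').const_mul 2
end
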